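/- In the MHW swaption setting, let ξ* be the unique zero of f and let μ be the centered Gaussian measure on ℝ with variance ζ². Then the (undiscounted) receiver swaption value satisfies ∫_ℝ max(f(x), 0) dμ(x) = Σ_{j=α+1}^{ω} c_j B_{αj} Φ(ξ*/ζ + ζ ς_{αj}) + Σ_{ι=α'+1}^{ω'−1} B_{α'ι} Φ(ξ*/ζ + ζ ς_{α'ι}) − Σ_{ι=α'}^{ω'−1} β_ι B_{α'ι} Φ(ξ*/ζ + ζ ν_{α'ι}), where Φ is the standard normal cumulative distribution function. -/

import Mathlib

/-!
At `−∞` the term `c_ω B_ω e^{−ς_ω ξ}` outgrows every negative term, because each floating rate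
satisfies `ν_ι < ς_ω`; at `+∞` the term `β_{α'} B'_{α'} e^{−ν_{α'} ξ}` outgrows every positive term,
because `ν_{α'} = −γ v(t'_{α'+1} − t_α)` lies strictly below every `ς_j` and `ς'_ι`. Hence `f` is
positive to the left of its unique zero `ξ*` and negative to the right, and the payoff integral is
`∫_{x ≤ ξ*} f dμ`. Each term of it is explicit: multiplying the `N(0, ζ²)` density by
`exp(−s x − s²ζ²/2)` gives the `N(−sζ², ζ²)` density, whose mass on `(−∞, ξ*]` is `Φ(ξ*/ζ + ζ s)`.
-/

noncomputable def mhwVol (a σ τ : ℝ) : ℝ :=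
  if a = 0 then σ * τ else σ * (1 - Real.exp (-(a * τ))) / a

noncomputable def stdNormalCDF (x : ℝ) : ℝ :=
  ∫ t in Set.Iic x, Real.exp (-t^2 / 2) / Real.sqrt (2 * Real.pi)

open Real MeasureTheory ProbabilityTheory Filter Set Topology
open scoped NNReal

lemma mhwVol_zero (a σ : ℝ) : mhwVol a σ 0 = 0 := by
  unfold mhwVol; split <;> simp

lemma mhwVol_strictMono {a σ : ℝ} (ha : 0 ≤ a) (hσ : 0 < σ) : StrictMono (mhwVol a σ) := by
  intro x y hxy
  unfold mhwVol
  split_ifs with h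
  · exact mul_lt_mul_of_pos_left hxy hσ
  · have ha' : 0 < a := lt_of_le_of_ne ha (Ne.symm h)
    gcongr

lemma mhwVol_pos {a σ τ : ℝ} (ha : 0 ≤ a) (hσ : 0 < σ) (hτ : 0 < τ) : 0 < mhwVol a σ τ :=
  mhwVol_zero a σ ▸ mhwVol_strictMono ha hσ hτ

lemma sub_mul_lt_one_sub_mul {V : ℝ → ℝ} (hV : StrictMono V) {γ x y z : ℝ} (hγ : γ ≤ 1)
    (hxy : x < y) (hyz : y ≤ z) : V x - γ * V y < (1 - γ) * V z := by
  nlinarith [hV hxy, hV.monotone hyz]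

lemma neg_mul_lt_one_sub_mul {γ u w : ℝ} (hγ0 : 0 ≤ γ) (hγ1 : γ ≤ 1) (hu : 0 < u) (hw : 0 < w) :
    -(γ * u) < (1 - γ) * w := by
  rcases hγ0.eq_or_lt with rfl | hγ
  · simpa using hw
  · nlinarith [mul_pos hγ hu, mul_nonneg (sub_nonneg.2 hγ1) hw.le]

lemma lt_and_le_of_lt_add_one {α : Type*} [Preorder α] {u : ℕ → α} {m n j : ℕ}
    (h : ∀ k ∈ Finset.Ico m n, u k < u (k + 1)) (hj : j ∈ Finset.Icc (m + 1) n) :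
    u m < u j ∧ u j ≤ u n := by
  have hu : StrictMonoOn u (Icc m n) := strictMonoOn_of_lt_add_one ordConnected_Icc
    fun k _ hk hk1 => h k (by simp only [mem_Icc, Finset.mem_Ico] at *; omega)
  simp only [Finset.mem_Icc] at hj
  exact ⟨hu ⟨le_rfl, by omega⟩ ⟨by omega, hj.2⟩ (by omega),
    hu.monotoneOn ⟨by omega, hj.2⟩ ⟨by omega, le_rfl⟩ hj.2⟩

lemma stdNormalCDF_eq_measureReal (y : ℝ) : stdNormalCDF y = (gaussianReal 0 1).real (Iic y) := by
  rw [measureReal_def, gaussianReal_apply_eq_integral 0 one_ne_zero, ENNReal.toReal_ofReal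
    (setIntegral_nonneg measurableSet_Iic fun x _ => gaussianPDFReal_nonneg _ _ _)]
  simp [stdNormalCDF, gaussianPDFReal, div_eq_inv_mul]

lemma gaussianReal_real_Iic (m : ℝ) {v : ℝ≥0} (hv : v ≠ 0) (b : ℝ) :
    (gaussianReal m v).real (Iic b) = stdNormalCDF ((b - m) / √v) := by
  have hsd : 0 < √(v : ℝ) := Real.sqrt_pos.2 (by positivity)
  have hmap : (gaussianReal 0 1).map (fun x => √v * x + m) = gaussianReal m v := by
    rw [show (fun x => √v * x + m) = (· + m) ∘ (√v * ·) from rfl,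
      ← Measure.map_map (by fun_prop) (by fun_prop), gaussianReal_map_const_mul,
      gaussianReal_map_add_const]
    congr 1
    · simp
    · ext; simp
  rw [← hmap, map_measureReal_apply (by fun_prop) measurableSet_Iic, stdNormalCDF_eq_measureReal]
  congr 1
  ext x
  simp [le_div_iff₀ hsd, mul_comm x, le_sub_iff_add_le]

lemma exp_mul_gaussianPDFReal (m : ℝ) (v : ℝ≥0) (s x : ℝ) :
    rexp (s * (x - m) - v * s ^ 2 / 2) * gaussianPDFReal m v x
      = gaussianPDFReal (m + v * s) v x := by
  rcases eq_or_ne v 0 with rfl | hv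
  · simp
  have hv' : (v : ℝ) ≠ 0 := by exact_mod_cast hv
  simp only [gaussianPDFReal, mul_left_comm (rexp _), ← Real.exp_add]
  congr 2
  field_simp
  ring

lemma setIntegral_Iic_exp_gaussianReal {v : ℝ≥0} (hv : v ≠ 0) (s b : ℝ) :
    ∫ x in Iic b, rexp (-s * x - s ^ 2 * v / 2) ∂gaussianReal 0 v
      = stdNormalCDF ((b + v * s) / √v) := by
  have htilt : ∀ x, (gaussianPDF 0 v x).toReal • rexp (-s * x - s ^ 2 * v / 2)
      = gaussianPDFReal (-(v * s)) v x := by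
    intro x
    rw [toReal_gaussianPDF, smul_eq_mul, mul_comm]
    convert exp_mul_gaussianPDFReal 0 v (-s) x using 3 <;> ring
  rw [gaussianReal_of_var_ne_zero 0 hv, setIntegral_withDensity_eq_setIntegral_toReal_smul
    (measurable_gaussianPDF 0 _) (ae_of_all _ fun _ => gaussianPDF_lt_top) _ measurableSet_Iic]
  simp_rw [htilt]
  rw [← ENNReal.toReal_ofReal (setIntegral_nonneg measurableSet_Iic fun x _ =>
      gaussianPDFReal_nonneg _ _ _), ← gaussianReal_apply_eq_integral _ hv, ← measureReal_def,
    gaussianReal_real_Iic _ hv, sub_neg_eq_add]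

section ExpSum

variable {ι : Type*} (s : Finset ι) (p q d : ι → ℝ)

lemma tendsto_exp_mul_sum_exp_atBot {K : ℝ} (h : ∀ i ∈ s, q i < K) :
    Tendsto (fun ξ => rexp (K * ξ) * ∑ i ∈ s, p i * rexp (-q i * ξ - d i)) atBot (𝓝 0) := by
  simp_rw [Finset.mul_sum]
  rw [← Finset.sum_const_zero (s := s)]
  refine tendsto_finsetSum s fun i hi => ?_
  have hlin : Tendsto (fun ξ => (K - q i) * ξ - d i) atBot atBot :=
    tendsto_atBot_add_const_right _ _ (tendsto_id.const_mul_atBot (sub_pos.2 (h i hi)))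
  have hterm := (Real.tendsto_exp_atBot.comp hlin).const_mul (p i)
  rw [mul_zero] at hterm
  refine hterm.congr fun ξ => ?_
  rw [Function.comp_apply, mul_left_comm, ← Real.exp_add]
  ring_nf

lemma tendsto_exp_mul_sum_exp_atTop {K : ℝ} (h : ∀ i ∈ s, K < q i) :
    Tendsto (fun ξ => rexp (K * ξ) * ∑ i ∈ s, p i * rexp (-q i * ξ - d i)) atTop (𝓝 0) := by
  have := (tendsto_exp_mul_sum_exp_atBot s p (-q) d (K := -K) fun i hi => neg_lt_neg (h i hi)).comp
    tendsto_neg_atTop_atBot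
  simpa [Function.comp_def] using this

lemma eventually_lt_sum_exp {l : Filter ℝ} {N : ℝ → ℝ} (hp : ∀ i ∈ s, 0 ≤ p i) {i : ι}
    (hi : i ∈ s) (hpi : 0 < p i) (hN : Tendsto (fun ξ => rexp (q i * ξ) * N ξ) l (𝓝 0)) :
    ∀ᶠ ξ in l, N ξ < ∑ j ∈ s, p j * rexp (-q j * ξ - d j) := by
  filter_upwards [hN.eventually (gt_mem_nhds (mul_pos hpi (exp_pos (-d i))))] with ξ hξ
  refine lt_of_mul_lt_mul_left (hξ.trans_le ?_) (exp_pos _).le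
  calc p i * rexp (-d i) = rexp (q i * ξ) * (p i * rexp (-q i * ξ - d i)) := by
        rw [mul_left_comm, ← Real.exp_add]; ring_nf
    _ ≤ _ := by
      gcongr
      exact Finset.single_le_sum (f := fun j => p j * rexp (-q j * ξ - d j))
        (fun j hj => mul_nonneg (hp j hj) (exp_pos _).le) hi

lemma integrable_sum_exp_gaussianReal (m : ℝ) (v : ℝ≥0) :
    Integrable (fun x => ∑ i ∈ s, p i * rexp (-q i * x - d i)) (gaussianReal m v) := by
  refine integrable_finsetSum s fun i _ => ?_
  refine ((integrable_exp_mul_gaussianReal (-q i)).const_mul (p i * rexp (-d i))).congr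
    (ae_of_all _ fun x => ?_)
  dsimp only
  rw [mul_assoc, ← Real.exp_add, sub_eq_neg_add]

lemma setIntegral_Iic_sum_exp_gaussianReal {ζ : ℝ} (hζ : 0 < ζ) (b : ℝ) :
    ∫ x in Iic b, ∑ i ∈ s, p i * rexp (-q i * x - q i ^ 2 * ζ ^ 2 / 2)
        ∂gaussianReal 0 ⟨ζ ^ 2, sq_nonneg ζ⟩
      = ∑ i ∈ s, p i * stdNormalCDF (b / ζ + ζ * q i) := by
  set v : ℝ≥0 := ⟨ζ ^ 2, sq_nonneg ζ⟩
  have hv : v ≠ 0 := NNReal.coe_ne_zero.1 (pow_ne_zero 2 hζ.ne')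
  rw [integral_finsetSum s fun i _ =>
    (integrable_sum_exp_gaussianReal {i} p q (fun i => q i ^ 2 * ζ ^ 2 / 2) 0 v).restrict.congr
      (by simp)]
  refine Finset.sum_congr rfl fun i _ => ?_
  rw [integral_const_mul]
  have h : ∫ x in Iic b, rexp (-q i * x - q i ^ 2 * ζ ^ 2 / 2) ∂gaussianReal 0 v
      = stdNormalCDF ((b + ζ ^ 2 * q i) / √(ζ ^ 2)) := setIntegral_Iic_exp_gaussianReal hv (q i) b
  rw [h, Real.sqrt_sq hζ.le]
  congr 2
  field_simp

end ExpSum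

lemma pos_of_lt_of_unique_zero {g : ℝ → ℝ} (hg : Continuous g) (hbot : ∀ᶠ x in atBot, 0 < g x)
    {z : ℝ} (huniq : ∀ x, g x = 0 → x = z) {x : ℝ} (hx : x < z) : 0 < g x := by
  by_contra! hgx
  obtain ⟨y, hgy, hyx⟩ := (hbot.and (eventually_lt_atBot x)).exists
  obtain ⟨w, hw, hgw⟩ := intermediate_value_Icc' hyx.le hg.continuousOn ⟨hgx, hgy.le⟩
  exact hx.not_ge (huniq w hgw ▸ hw.2)

lemma neg_of_gt_of_unique_zero {g : ℝ → ℝ} (hg : Continuous g) (htop : ∀ᶠ x in atTop, g x < 0)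
    {z : ℝ} (huniq : ∀ x, g x = 0 → x = z) {x : ℝ} (hx : z < x) : g x < 0 := by
  have := pos_of_lt_of_unique_zero (g := fun x => -g (-x)) (by fun_prop)
    (tendsto_neg_atBot_atTop.eventually (htop.mono fun _ => neg_pos.2))
    (z := -z) (fun y hy => by rw [← huniq (-y) (neg_eq_zero.1 hy), neg_neg]) (neg_lt_neg hx)
  simpa using this

lemma integral_max_zero_eq_setIntegral_Iic {g : ℝ → ℝ} (hg : Continuous g)
    (hbot : ∀ᶠ x in atBot, 0 < g x) (htop : ∀ᶠ x in atTop, g x < 0) {z : ℝ} (hz : g z = 0)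
    (huniq : ∀ x, g x = 0 → x = z) (μ : Measure ℝ) :
    ∫ x, max (g x) 0 ∂μ = ∫ x in Iic z, g x ∂μ := by
  rw [← integral_indicator measurableSet_Iic]
  congr 1 with x
  rcases lt_trichotomy x z with hx | rfl | hx
  · rw [indicator_of_mem (mem_Iic.2 hx.le),
      max_eq_left (pos_of_lt_of_unique_zero hg hbot huniq hx).le]
  · simp [hz]
  · rw [indicator_of_notMem (notMem_Iic.2 hx),
      max_eq_right (neg_of_gt_of_unique_zero hg htop huniq hx).le]

theorem mhw_swaption_formula_general
    (a σ γ ζ : ℝ) (ha : 0 ≤ a) (hσ : 0 < σ) (hγ0 : 0 ≤ γ) (hγ1 : γ ≤ 1) (hζ : 0 < ζ)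
    (α ω α' ω' : ℕ) (hω : α + 1 ≤ ω) (hω' : α' + 2 ≤ ω')
    (t t' : ℕ → ℝ)
    (ht : ∀ j ∈ Finset.Ico α ω, t j < t (j+1))
    (ht' : ∀ ι ∈ Finset.Ico α' ω', t' ι < t' (ι+1))
    (hstart : t' α' = t α) (hend : t' ω' = t ω)
    (c B : ℕ → ℝ) (hc : ∀ j ∈ Finset.Icc (α+1) ω, 0 < c j)
    (hB : ∀ j ∈ Finset.Icc (α+1) ω, 0 < B j)
    (B' β : ℕ → ℝ) (hB' : ∀ ι ∈ Finset.Ico α' ω', 0 < B' ι)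
    (hβ : ∀ ι ∈ Finset.Ico α' ω', 1 ≤ β ι)
    (ς ς' ν : ℕ → ℝ)
    (hς : ∀ j, ς j = (1 - γ) * mhwVol a σ (t j - t α))
    (hς' : ∀ ι, ς' ι = (1 - γ) * mhwVol a σ (t' ι - t α))
    (hν : ∀ ι, ν ι = mhwVol a σ (t' ι - t α) - γ * mhwVol a σ (t' (ι+1) - t α))
    (f : ℝ → ℝ)
    (hf : ∀ ξ : ℝ, f ξ =
        (∑ j ∈ Finset.Icc (α+1) ω, c j * B j * Real.exp (-(ς j) * ξ - (ς j)^2 * ζ^2 / 2))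
      + (∑ ι ∈ Finset.Ico (α'+1) ω', B' ι * Real.exp (-(ς' ι) * ξ - (ς' ι)^2 * ζ^2 / 2))
      - (∑ ι ∈ Finset.Ico α' ω', β ι * B' ι * Real.exp (-(ν ι) * ξ - (ν ι)^2 * ζ^2 / 2)))
    (ξs : ℝ) (hξs : f ξs = 0) (huniq : ∀ ξ : ℝ, f ξ = 0 → ξ = ξs) :
    ∫ x, max (f x) 0 ∂(ProbabilityTheory.gaussianReal 0 ⟨ζ^2, sq_nonneg ζ⟩)
      = (∑ j ∈ Finset.Icc (α+1) ω, c j * B j * stdNormalCDF (ξs / ζ + ζ * ς j))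
        + (∑ ι ∈ Finset.Ico (α'+1) ω', B' ι * stdNormalCDF (ξs / ζ + ζ * ς' ι))
        - (∑ ι ∈ Finset.Ico α' ω', β ι * B' ι * stdNormalCDF (ξs / ζ + ζ * ν ι)) := by
  have hT : ∀ j ∈ Finset.Icc (α + 1) ω, t α < t j ∧ t j ≤ t ω :=
    fun j hj => lt_and_le_of_lt_add_one ht hj
  have hT' : ∀ ι ∈ Finset.Icc (α' + 1) ω', t α < t' ι ∧ t' ι ≤ t ω :=
    fun ι hι => hstart ▸ hend ▸ lt_and_le_of_lt_add_one ht' hι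
  have hsucc : ∀ ι ∈ Finset.Ico α' ω', ι + 1 ∈ Finset.Icc (α' + 1) ω' := by
    intro ι hι
    simp only [Finset.mem_Ico, Finset.mem_Icc] at *
    omega
  have hω_mem : ω ∈ Finset.Icc (α + 1) ω := by simp [hω]
  have hα' : α' ∈ Finset.Ico α' ω' := by simp only [Finset.mem_Ico]; omega
  have hcB : ∀ j ∈ Finset.Icc (α + 1) ω, 0 < c j * B j := fun j hj => mul_pos (hc j hj) (hB j hj)
  have hβB' : ∀ ι ∈ Finset.Ico α' ω', 0 < β ι * B' ι :=
    fun ι hι => mul_pos (by linarith [hβ ι hι]) (hB' ι hι)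
  have hνω : ∀ ι ∈ Finset.Ico α' ω', ν ι < ς ω := fun ι hι => by
    rw [hν, hς]
    exact sub_mul_lt_one_sub_mul (mhwVol_strictMono ha hσ) hγ1 (by linarith [ht' ι hι])
      (by linarith [hT' _ (hsucc ι hι)])
  have hνα' : ∀ τ, t α < τ → ν α' < (1 - γ) * mhwVol a σ (τ - t α) := fun τ hτ => by
    rw [hν, hstart, sub_self, mhwVol_zero, zero_sub]
    exact neg_mul_lt_one_sub_mul hγ0 hγ1
      (mhwVol_pos ha hσ (by linarith [(hT' _ (hsucc α' hα')).1])) (mhwVol_pos ha hσ (by linarith))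
  have hbot : ∀ᶠ ξ in atBot, 0 < f ξ := by
    have hS₂ : ∀ ξ, 0 ≤ ∑ ι ∈ Finset.Ico (α' + 1) ω',
        B' ι * rexp (-ς' ι * ξ - ς' ι ^ 2 * ζ ^ 2 / 2) := fun ξ => Finset.sum_nonneg fun ι hι =>
      mul_nonneg (hB' ι (Finset.Ico_subset_Ico_left (by omega) hι)).le (exp_pos _).le
    filter_upwards [eventually_lt_sum_exp _ _ ς (fun j => ς j ^ 2 * ζ ^ 2 / 2)
      (fun j hj => (hcB j hj).le) hω_mem (hcB ω hω_mem)
      (tendsto_exp_mul_sum_exp_atBot _ _ _ _ hνω)] with ξ h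
    rw [hf]
    exact sub_pos.2 (h.trans_le (le_add_of_nonneg_right (hS₂ ξ)))
  have htop : ∀ᶠ ξ in atTop, f ξ < 0 := by
    have hN := (tendsto_exp_mul_sum_exp_atTop _ (fun j => c j * B j) _
      (fun j => ς j ^ 2 * ζ ^ 2 / 2) fun j hj => hς j ▸ hνα' _ (hT j hj).1).add
      (tendsto_exp_mul_sum_exp_atTop _ B' _ (fun ι => ς' ι ^ 2 * ζ ^ 2 / 2)
        fun ι hι => hς' ι ▸ hνα' _ (hT' ι (Finset.Ico_subset_Icc_self hι)).1)
    rw [add_zero] at hN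
    simp_rw [← mul_add] at hN
    filter_upwards [eventually_lt_sum_exp _ _ ν (fun ι => ν ι ^ 2 * ζ ^ 2 / 2)
      (fun ι hι => (hβB' ι hι).le) hα' (hβB' α' hα') hN] with ξ h
    rw [hf]
    exact sub_neg.2 h
  have hI : ∀ (s : Finset ℕ) (p q : ℕ → ℝ), Integrable
      (fun x => ∑ i ∈ s, p i * rexp (-q i * x - q i ^ 2 * ζ ^ 2 / 2))
      ((gaussianReal 0 ⟨ζ ^ 2, sq_nonneg ζ⟩).restrict (Iic ξs)) :=
    fun s p q => (integrable_sum_exp_gaussianReal s p q _ 0 _).restrict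
  rw [integral_max_zero_eq_setIntegral_Iic ((continuous_congr hf).2 (by fun_prop)) hbot htop hξs
    huniq]
  simp only [hf]
  rw [integral_sub ((hI _ _ ς).fun_add (hI _ B' ς')) (hI _ _ ν),
    integral_add (hI _ _ ς) (hI _ B' ς'), setIntegral_Iic_sum_exp_gaussianReal _ _ _ hζ,
    setIntegral_Iic_sum_exp_gaussianReal _ _ _ hζ, setIntegral_Iic_sum_exp_gaussianReal _ _ _ hζ]

/-- Closed formula for the (undiscounted) receiver swaption value in the MHW model. -/
theorem mhw_swaption_formula
    (a σ γ ζ : ℝ) (ha : 0 ≤ a) (hσ : 0 < σ) (hγ0 : 0 ≤ γ) (hγ1 : γ ≤ 1) (hζ : 0 < ζ)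
    (α ω α' ω' : ℕ) (hω : α + 1 ≤ ω) (hω' : α' + 2 ≤ ω')
    (t t' : ℕ → ℝ)
    (ht : ∀ j ∈ Finset.Ico α ω, t j < t (j+1))
    (ht' : ∀ ι ∈ Finset.Ico α' ω', t' ι < t' (ι+1))
    (hstart : t' α' = t α) (hend : t' ω' = t ω)
    (c B : ℕ → ℝ) (hc : ∀ j ∈ Finset.Icc (α+1) ω, 0 < c j)
    (hB : ∀ j ∈ Finset.Icc (α+1) ω, 0 < B j)
    (B' β : ℕ → ℝ) (hB' : ∀ ι ∈ Finset.Ico α' ω', 0 < B' ι) (hB'α' : B' α' = 1)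
    (hβ : ∀ ι ∈ Finset.Ico α' ω', 1 ≤ β ι)
    (ς ς' ν : ℕ → ℝ)
    (hς : ∀ j, ς j = (1 - γ) * mhwVol a σ (t j - t α))
    (hς' : ∀ ι, ς' ι = (1 - γ) * mhwVol a σ (t' ι - t α))
    (hν : ∀ ι, ν ι = mhwVol a σ (t' ι - t α) - γ * mhwVol a σ (t' (ι+1) - t α))
    (f : ℝ → ℝ)
    (hf : ∀ ξ : ℝ, f ξ =
        (∑ j ∈ Finset.Icc (α+1) ω, c j * B j * Real.exp (-(ς j) * ξ - (ς j)^2 * ζ^2 / 2))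
      + (∑ ι ∈ Finset.Ico (α'+1) ω', B' ι * Real.exp (-(ς' ι) * ξ - (ς' ι)^2 * ζ^2 / 2))
      - (∑ ι ∈ Finset.Ico α' ω', β ι * B' ι * Real.exp (-(ν ι) * ξ - (ν ι)^2 * ζ^2 / 2)))
    (ξs : ℝ) (hξs : f ξs = 0) (huniq : ∀ ξ : ℝ, f ξ = 0 → ξ = ξs) :
    ∫ x, max (f x) 0 ∂(ProbabilityTheory.gaussianReal 0 ⟨ζ^2, sq_nonneg ζ⟩)
      = (∑ j ∈ Finset.Icc (α+1) ω, c j * B j * stdNormalCDF (ξs / ζ + ζ * ς j))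
        + (∑ ι ∈ Finset.Ico (α'+1) ω', B' ι * stdNormalCDF (ξs / ζ + ζ * ς' ι))
        - (∑ ι ∈ Finset.Ico α' ω', β ι * B' ι * stdNormalCDF (ξs / ζ + ζ * ν ι)) :=
  mhw_swaption_formula_general a σ γ ζ ha hσ hγ0 hγ1 hζ α ω α' ω' hω hω' t t' ht ht' hstart hend c B
    hc hB B' β hB' hβ ς ς' ν hς hς' hν f hf ξs hξs huniq
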